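/- Let S and T be bitstrings that differ by defects. Then w(S) and w(T) also differ by defects, and the number of defects between w(S) and w(T) equals the number of defects between S and T. -/

import Mathlib

/-- Two bitstrings are balanced if they have the same length and the same
number of ones. -/
def BalancedBits (S T : List Bool) : Prop :=
  S.length = T.length ∧ S.count true = T.count true

/-- The substitution `w`, simultaneously replacing each `0` by `001` and each
`1` by `01`. -/
def wsub (S : List Bool) : List Bool :=
  S.flatMap (fun b => if b then [false, true] else [false, false, true])

/-- A defect of balanced bitstrings `S` and `T` (1-indexed) is an index
`1 ≤ i ≤ |S| − 1` such that the length-`(i−1)` prefixes are balanced,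
`S[i] ≠ T[i]`, `S[i] ≠ S[i+1]`, and `S[i+1] ≠ T[i+1]`. -/
def IsDefect (S T : List Bool) (i : ℕ) : Prop :=
  1 ≤ i ∧ i + 1 ≤ S.length ∧
  BalancedBits (S.take (i - 1)) (T.take (i - 1)) ∧
  S.getD (i - 1) false ≠ T.getD (i - 1) false ∧
  S.getD (i - 1) false ≠ S.getD i false ∧
  S.getD i false ≠ T.getD i false

/-- `S` and `T` differ by defects if they are balanced and every index where
they differ is part of a defect. -/
def DifferByDefects (S T : List Bool) : Prop :=
  BalancedBits S T ∧
  ∀ i, 1 ≤ i → i ≤ S.length → S.getD (i - 1) false ≠ T.getD (i - 1) false →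
    IsDefect S T (i - 1) ∨ IsDefect S T i

/-!
Two bitstrings differ by defects exactly when one arises from the other by swapping the two
letters of some disjoint adjacent pairs `b (!b)`, and the defects are then exactly the first
positions of the swapped pairs. The substitution `w` maps a letter common to both strings to a
common block, and a swapped pair `b (!b)` to `0 b (!b) 01`, which is again one swapped pair
among common letters; so `w(S)` arises from `w(T)` by the same number of swaps.
-/

section

variable {b : Bool} {S T : List Bool} {k : ℕ}

lemma balancedBits_cons_cons : BalancedBits (b :: S) (b :: T) ↔ BalancedBits S T := by
  simp [BalancedBits, List.count_cons]

lemma balancedBits_swap : BalancedBits (b :: (!b) :: S) ((!b) :: b :: T) ↔ BalancedBits S T := by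
  cases b <;> simp [BalancedBits]

lemma not_isDefect_zero : ¬ IsDefect S T 0 := fun h => by
  have := h.1
  omega

lemma isDefect_cons_cons_succ : IsDefect (b :: S) (b :: T) (k + 1) ↔ IsDefect S T k := by
  rcases k with _ | k
  · simp [IsDefect]
  · simp only [IsDefect, Nat.add_sub_cancel, List.take_succ_cons, List.getD_cons_succ,
      balancedBits_cons_cons, List.length_cons]
    exact and_congr (by omega) (and_congr (by omega) Iff.rfl)

lemma isDefect_swap_one : IsDefect (b :: (!b) :: S) ((!b) :: b :: T) 1 := by
  cases b <;> simp [IsDefect, BalancedBits]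

lemma isDefect_swap_add_two :
    IsDefect (b :: (!b) :: S) ((!b) :: b :: T) (k + 2) ↔ IsDefect S T k := by
  rcases k with _ | k
  · cases b <;> simp [IsDefect, BalancedBits]
  · simp only [IsDefect, show k + 1 + 2 - 1 = k + 2 by omega, Nat.add_sub_cancel,
      List.take_succ_cons, List.getD_cons_succ, balancedBits_swap, List.length_cons]
    exact and_congr (by omega) (and_congr (by omega) Iff.rfl)

lemma defects_finite : {i | IsDefect S T i}.Finite :=
  (Set.finite_Iio S.length).subset fun i hi => by
    have := hi.2.1
    simp only [Set.mem_Iio]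
    omega

lemma defects_cons_cons :
    {i | IsDefect (b :: S) (b :: T) i} = (· + 1) '' {i | IsDefect S T i} := by
  ext (_ | k)
  · simp [not_isDefect_zero]
  · simp [isDefect_cons_cons_succ]

lemma defects_swap : {i | IsDefect (b :: (!b) :: S) ((!b) :: b :: T) i} =
    insert 1 ((· + 2) '' {i | IsDefect S T i}) := by
  ext (_ | _ | k)
  · simp [not_isDefect_zero]
  · simp [isDefect_swap_one]
  · simp [isDefect_swap_add_two]

lemma ncard_defects_cons_cons :
    {i | IsDefect (b :: S) (b :: T) i}.ncard = {i | IsDefect S T i}.ncard := by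
  rw [defects_cons_cons, Set.ncard_image_of_injective _ (add_left_injective 1)]

lemma ncard_defects_swap :
    {i | IsDefect (b :: (!b) :: S) ((!b) :: b :: T) i}.ncard = {i | IsDefect S T i}.ncard + 1 := by
  have h1 : 1 ∉ (· + 2) '' {i | IsDefect S T i} := by simp
  rw [defects_swap, Set.ncard_insert_of_notMem h1 (defects_finite.image _),
    Set.ncard_image_of_injective _ (add_left_injective 2)]

lemma differByDefects_iff : DifferByDefects S T ↔ BalancedBits S T ∧ ∀ i < S.length,
    S.getD i false ≠ T.getD i false → IsDefect S T i ∨ IsDefect S T (i + 1) := by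
  refine and_congr_right fun _ => ⟨fun h i hi hd => by simpa using h (i + 1) (by omega) hi hd,
    fun h i h1 h2 hd => ?_⟩
  obtain ⟨j, rfl⟩ : ∃ j, i = j + 1 := ⟨i - 1, by omega⟩
  simpa using h j (by omega) (by simpa using hd)

lemma differByDefects_cons_cons : DifferByDefects (b :: S) (b :: T) ↔ DifferByDefects S T := by
  rw [differByDefects_iff, differByDefects_iff, List.length_cons, Nat.forall_lt_succ_left]
  simp [balancedBits_cons_cons, isDefect_cons_cons_succ]

lemma differByDefects_swap :
    DifferByDefects (b :: (!b) :: S) ((!b) :: b :: T) ↔ DifferByDefects S T := by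
  rw [differByDefects_iff, differByDefects_iff, List.length_cons, List.length_cons,
    Nat.forall_lt_succ_left, Nat.forall_lt_succ_left]
  simp [balancedBits_swap, isDefect_swap_one, isDefect_swap_add_two]

lemma DifferByDefects.exists_swap (h : DifferByDefects (b :: S) ((!b) :: T)) :
    ∃ S' T', S = (!b) :: S' ∧ T = b :: T' := by
  rcases (differByDefects_iff.mp h).2 0 (by simp) (by simp) with h0 | ⟨-, hlen, -, -, hS, hST⟩
  · exact absurd h0 not_isDefect_zero
  have hlen' := h.1.1
  simp only [List.length_cons] at hlen hlen'
  obtain ⟨s, S', rfl⟩ := List.exists_cons_of_length_pos (by omega : 0 < S.length)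
  obtain ⟨t, T', rfl⟩ := List.exists_cons_of_length_pos (by omega : 0 < T.length)
  cases b <;> cases s <;> cases t <;> simp_all

end

inductive DisjointSwaps : ℕ → List Bool → List Bool → Prop
  | nil : DisjointSwaps 0 [] []
  | cons (b : Bool) {n : ℕ} {S T : List Bool} :
      DisjointSwaps n S T → DisjointSwaps n (b :: S) (b :: T)
  | swap (b : Bool) {n : ℕ} {S T : List Bool} :
      DisjointSwaps n S T → DisjointSwaps (n + 1) (b :: (!b) :: S) ((!b) :: b :: T)

namespace DisjointSwaps

variable {n : ℕ} {S T : List Bool}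

lemma append_left (U : List Bool) (h : DisjointSwaps n S T) :
    DisjointSwaps n (U ++ S) (U ++ T) := by
  induction U with
  | nil => exact h
  | cons b U ih => exact ih.cons b

lemma differByDefects (h : DisjointSwaps n S T) : DifferByDefects S T := by
  induction h with
  | nil => exact ⟨⟨rfl, rfl⟩, fun i h1 h2 _ => by simp at h2; omega⟩
  | cons _ _ ih => exact differByDefects_cons_cons.mpr ih
  | swap _ _ ih => exact differByDefects_swap.mpr ih

lemma ncard_defects (h : DisjointSwaps n S T) : {i | IsDefect S T i}.ncard = n := by
  induction h with
  | nil => simp [IsDefect]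
  | cons b _ ih => rw [ncard_defects_cons_cons, ih]
  | swap b _ ih => rw [ncard_defects_swap, ih]

end DisjointSwaps

theorem DifferByDefects.exists_disjointSwaps :
    ∀ {S T : List Bool}, DifferByDefects S T → ∃ n, DisjointSwaps n S T
  | [], T, h => ⟨0, List.length_eq_zero_iff.mp h.1.1.symm ▸ .nil⟩
  | _ :: _, [], h => absurd h.1.1 (by simp)
  | a :: S, c :: T, h => by
    by_cases hca : c = a
    · subst hca
      obtain ⟨n, hn⟩ := exists_disjointSwaps (differByDefects_cons_cons.mp h)
      exact ⟨n, hn.cons c⟩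
    · obtain rfl := Bool.eq_not_of_ne hca
      obtain ⟨S', T', rfl, rfl⟩ := h.exists_swap
      obtain ⟨n, hn⟩ := exists_disjointSwaps (differByDefects_swap.mp h)
      exact ⟨n + 1, hn.swap a⟩
termination_by S => S.length

lemma wsub_cons (b : Bool) (S : List Bool) : wsub (b :: S) = wsub [b] ++ wsub S := by
  simp [wsub]

lemma wsub_swap (b : Bool) (S : List Bool) :
    wsub (b :: (!b) :: S) = false :: b :: (!b) :: false :: true :: wsub S := by
  cases b <;> simp [wsub]

lemma DisjointSwaps.wsub {n : ℕ} {S T : List Bool} (h : DisjointSwaps n S T) :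
    DisjointSwaps n (wsub S) (wsub T) := by
  induction h with
  | nil => exact .nil
  | @cons b _ S T _ ih => rw [wsub_cons b S, wsub_cons b T]; exact ih.append_left _
  | @swap b _ _ T _ ih =>
    have hT := wsub_swap (!b) T
    rw [Bool.not_not] at hT
    rw [wsub_swap, hT]
    exact .cons false (.swap b (.cons false (.cons true ih)))

/-- Defect preservation: if `S` and `T` differ by defects, then `w(S)` and
`w(T)` differ by defects, and the number of defects is the same. -/
theorem defect_preservation (S T : List Bool) (h : DifferByDefects S T) :
    DifferByDefects (wsub S) (wsub T) ∧
    {i : ℕ | IsDefect (wsub S) (wsub T) i}.ncard = {i : ℕ | IsDefect S T i}.ncard := by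
  obtain ⟨n, hST⟩ := h.exists_disjointSwaps
  exact ⟨hST.wsub.differByDefects, by rw [hST.wsub.ncard_defects, hST.ncard_defects]⟩
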